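/- (Loss decay for Bregman iterations with adaptive λ.) Let ℒ : ℝ^d → ℝ be differentiable with L-Lipschitz gradient, τ > 0, and λ⁽ᵏ⁾, λ⁽ᵏ⁻¹⁾ ≥ 0. Suppose p⁽ᵏ⁾ ∈ ∂EN_{λ⁽ᵏ⁻¹⁾}(θ⁽ᵏ⁾), p⁽ᵏ⁺¹⁾ = p⁽ᵏ⁾ − τ∇ℒ(θ⁽ᵏ⁾), and p⁽ᵏ⁺¹⁾ ∈ ∂EN_{λ⁽ᵏ⁾}(θ⁽ᵏ⁺¹⁾). Then ℒ(θ⁽ᵏ⁺¹⁾) + (1/τ − L/2)·‖θ⁽ᵏ⁺¹⁾ − θ⁽ᵏ⁾‖₂² + ((λ⁽ᵏ⁾ − λ⁽ᵏ⁻¹⁾)/τ)·(‖θ⁽ᵏ⁺¹⁾‖₁ − ‖θ⁽ᵏ⁾‖₁) ≤ ℒ(θ⁽ᵏ⁾). -/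

import Mathlib

open scoped RealInnerProductSpace BigOperators

noncomputable def l1 {d : ℕ} (x : EuclideanSpace ℝ (Fin d)) : ℝ := ∑ i, |x i|

noncomputable def EN {d : ℕ} (lam : ℝ) (θ : EuclideanSpace ℝ (Fin d)) : ℝ :=
  (1/2) * ‖θ‖^2 + lam * l1 θ

def IsENSubgradient {d : ℕ} (lam : ℝ) (p θ : EuclideanSpace ℝ (Fin d)) : Prop :=
  ∀ w : EuclideanSpace ℝ (Fin d), EN lam θ + ⟪p, w - θ⟫ ≤ EN lam w


/-! Since `½‖·‖²` is differentiable with gradient `θ`, a subgradient `p` of `EN_λ` at `θ` yields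
the subgradient `p - θ` of `λ‖·‖₁`. Adding the two resulting subgradient inequalities at `θᵏ` and
`θᵏ⁺¹` and inserting the update `pᵏ - pᵏ⁺¹ = τ∇ℒ(θᵏ)` gives
`τ⟪∇ℒ(θᵏ), θᵏ⁺¹ - θᵏ⟫ + ‖θᵏ⁺¹ - θᵏ‖² ≤ (λᵏ⁻¹ - λᵏ)(‖θᵏ⁺¹‖₁ - ‖θᵏ‖₁)`, and the descent inequality
for the `L`-smooth loss turns this into the claim. -/

open Set Filter Topology

lemma convexOn_l1 {d : ℕ} : ConvexOn ℝ univ (l1 : EuclideanSpace ℝ (Fin d) → ℝ) := by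
  have hsum : (l1 : EuclideanSpace ℝ (Fin d) → ℝ) = ∑ i, fun x => ‖x i‖ := by
    ext x; simp [l1]
  rw [hsum]
  exact Finset.sum_induction _ (ConvexOn ℝ univ) (fun _ _ => ConvexOn.add)
    (convexOn_const 0 convex_univ)
    fun i _ => convexOn_univ_norm.comp_linearMap (EuclideanSpace.projₗ i)

theorem le_add_add_half_of_hasDerivAt_le {φ φ' : ℝ → ℝ} {a b : ℝ}
    (hφ : ∀ t, HasDerivAt φ (φ' t) t) (hle : ∀ t ∈ Icc (0 : ℝ) 1, φ' t ≤ a + b * t) :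
    φ 1 ≤ φ 0 + a + b / 2 := by
  have hB : ∀ t, HasDerivAt (fun t => φ 0 + a * t + b / 2 * t ^ 2) (a + b * t) t := fun t =>
    ((((hasDerivAt_id' t).const_mul a).const_add (φ 0)).add
      ((hasDerivAt_pow 2 t).const_mul (b / 2))).congr_deriv (by norm_num; ring)
  simpa using image_le_of_deriv_right_le_deriv_boundary (a := 0) (b := 1)
    (fun t _ => (hφ t).continuousAt.continuousWithinAt)
    (fun t _ => (hφ t).hasDerivWithinAt) (by simp)
    (fun t _ => (hB t).continuousAt.continuousWithinAt)
    (fun t _ => (hB t).hasDerivWithinAt) (fun t ht => hle t (Ico_subset_Icc_self ht))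
    (right_mem_Icc.2 zero_le_one)

section InnerProductSpace

variable {E : Type*} [NormedAddCommGroup E] [InnerProductSpace ℝ E]

theorem ConvexOn.inner_sub_le_of_forall_half_sq_add_le {g : E → ℝ} (hg : ConvexOn ℝ univ g)
    {p θ : E} (h : ∀ w, 1 / 2 * ‖θ‖ ^ 2 + g θ + ⟪p, w - θ⟫ ≤ 1 / 2 * ‖w‖ ^ 2 + g w) (w : E) :
    g θ + ⟪p - θ, w - θ⟫ ≤ g w := by
  set v := w - θ
  have hsegment : ∀ t ∈ Ioc (0 : ℝ) 1, ⟪p - θ, v⟫ ≤ g w - g θ + t / 2 * ‖v‖ ^ 2 := by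
    rintro t ⟨ht0, ht1⟩
    have hconv : g (θ + t • v) ≤ (1 - t) * g θ + t * g w := by
      have hpt : θ + t • v = (1 - t) • θ + t • w := by
        simp only [v, smul_sub, sub_smul, one_smul]; abel
      rw [hpt]
      simpa only [smul_eq_mul] using
        hg.2 (mem_univ θ) (mem_univ w) (sub_nonneg.2 ht1) ht0.le (sub_add_cancel 1 t)
    have hsq : ‖θ + t • v‖ ^ 2 = ‖θ‖ ^ 2 + 2 * t * ⟪θ, v⟫ + t ^ 2 * ‖v‖ ^ 2 := by
      rw [norm_add_sq_real, norm_smul, real_inner_smul_right, Real.norm_of_nonneg ht0.le]; ring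
    have hsub := h (θ + t • v)
    rw [add_sub_cancel_left, real_inner_smul_right, hsq] at hsub
    have hscaled : t * ⟪p - θ, v⟫ ≤ t * (g w - g θ + t / 2 * ‖v‖ ^ 2) := by
      rw [inner_sub_left]; linarith
    exact le_of_mul_le_mul_left hscaled ht0
  have hlim : Tendsto (fun t : ℝ => g w - g θ + t / 2 * ‖v‖ ^ 2) (𝓝[>] 0) (𝓝 (g w - g θ)) := by
    have hcont : Continuous fun t : ℝ => g w - g θ + t / 2 * ‖v‖ ^ 2 := by fun_prop
    simpa using (hcont.tendsto 0).mono_left nhdsWithin_le_nhds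
  have := ge_of_tendsto hlim (eventually_mem_set.2 (Ioc_mem_nhdsGT zero_lt_one) |>.mono hsegment)
  linarith

variable [CompleteSpace E]

theorem HasGradientAt.hasDerivAt_comp_add_smul {f : E → ℝ} {f' x v : E} {t : ℝ}
    (h : HasGradientAt f f' (x + t • v)) :
    HasDerivAt (fun s : ℝ => f (x + s • v)) ⟪f', v⟫ t := by
  have hline : HasDerivAt (fun s : ℝ => x + s • v) v t := by
    simpa using ((hasDerivAt_id t).smul_const v).const_add x
  have := h.hasFDerivAt.comp_hasDerivAt t hline
  simp only [InnerProductSpace.toDual_apply_apply] at this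
  exact this

theorem le_add_inner_add_half_mul_sq_of_lipschitz_gradient {f : E → ℝ} {f' : E → E} {L : ℝ}
    (hf : ∀ x, HasGradientAt f (f' x) x) (hL : ∀ x y, ‖f' x - f' y‖ ≤ L * ‖x - y‖)
    (x y : E) : f y ≤ f x + ⟪f' x, y - x⟫ + L / 2 * ‖y - x‖ ^ 2 := by
  set v := y - x
  have hbound : ∀ t ∈ Icc (0 : ℝ) 1, ⟪f' (x + t • v), v⟫ ≤ ⟪f' x, v⟫ + L * ‖v‖ ^ 2 * t := by
    intro t ht
    calc ⟪f' (x + t • v), v⟫ = ⟪f' x, v⟫ + ⟪f' (x + t • v) - f' x, v⟫ := by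
          rw [inner_sub_left]; ring
      _ ≤ ⟪f' x, v⟫ + L * ‖(x + t • v) - x‖ * ‖v‖ := by
          gcongr
          exact (real_inner_le_norm _ _).trans (by gcongr; exact hL _ _)
      _ = ⟪f' x, v⟫ + L * ‖v‖ ^ 2 * t := by
          rw [add_sub_cancel_left, norm_smul, Real.norm_of_nonneg ht.1]; ring
  simpa [v, mul_div_right_comm] using
    le_add_add_half_of_hasDerivAt_le (fun t => (hf (x + t • v)).hasDerivAt_comp_add_smul) hbound

end InnerProductSpace

section ElasticNet

variable {d : ℕ}

theorem IsENSubgradient.mul_l1_add_inner_sub_le {lam : ℝ} {p θ : EuclideanSpace ℝ (Fin d)}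
    (h : IsENSubgradient lam p θ) (hlam : 0 ≤ lam) (w : EuclideanSpace ℝ (Fin d)) :
    lam * l1 θ + ⟪p - θ, w - θ⟫ ≤ lam * l1 w :=
  (convexOn_l1.smul hlam).inner_sub_le_of_forall_half_sq_add_le h w

theorem inner_sub_add_norm_sq_le_of_isENSubgradient {lam lam' : ℝ}
    {p p' θ θ' : EuclideanSpace ℝ (Fin d)} (hlam : 0 ≤ lam) (hlam' : 0 ≤ lam')
    (h : IsENSubgradient lam p θ) (h' : IsENSubgradient lam' p' θ') :
    ⟪p - p', θ' - θ⟫ + ‖θ' - θ‖ ^ 2 ≤ (lam - lam') * (l1 θ' - l1 θ) := by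
  have hθ := h.mul_l1_add_inner_sub_le hlam θ'
  have hθ' := h'.mul_l1_add_inner_sub_le hlam' θ
  have hsum : ⟪p - θ, θ' - θ⟫ + ⟪p' - θ', θ - θ'⟫ = ⟪p - p', θ' - θ⟫ + ‖θ' - θ‖ ^ 2 := by
    rw [← real_inner_self_eq_norm_sq, ← neg_sub θ' θ, inner_neg_right, ← sub_eq_add_neg,
      ← inner_sub_left, ← inner_add_left]
    congr 1; abel
  linarith

end ElasticNet

/-- Loss decay for Bregman iterations with adaptive λ (Lemma 1). -/
theorem bregman_loss_decay {d : ℕ} (L τ lamk lamk1 : ℝ)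
    (hτ : 0 < τ) (hlamk : 0 ≤ lamk) (hlamk1 : 0 ≤ lamk1)
    (ℒ : EuclideanSpace ℝ (Fin d) → ℝ) (G : EuclideanSpace ℝ (Fin d) → EuclideanSpace ℝ (Fin d))
    (hgrad : ∀ x, HasGradientAt ℒ (G x) x)
    (hLip : ∀ x y, ‖G x - G y‖ ≤ L * ‖x - y‖)
    (θk θk1 pk pk1 : EuclideanSpace ℝ (Fin d))
    (hpk : IsENSubgradient lamk1 pk θk)
    (hstep : pk1 = pk - τ • G θk)
    (hpk1 : IsENSubgradient lamk pk1 θk1) :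
    ℒ θk1 + (1/τ - L/2) * ‖θk1 - θk‖^2 + ((lamk - lamk1)/τ) * (l1 θk1 - l1 θk) ≤ ℒ θk := by
  have hmono := inner_sub_add_norm_sq_le_of_isENSubgradient hlamk1 hlamk hpk hpk1
  rw [hstep, sub_sub_cancel, real_inner_smul_left] at hmono
  have hG : ⟪G θk, θk1 - θk⟫
      ≤ ((lamk1 - lamk) * (l1 θk1 - l1 θk) - ‖θk1 - θk‖ ^ 2) / τ := by
    rw [le_div_iff₀ hτ]; linarith
  have hsplit : ((lamk1 - lamk) * (l1 θk1 - l1 θk) - ‖θk1 - θk‖ ^ 2) / τ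
      = -(1 / τ * ‖θk1 - θk‖ ^ 2) - (lamk - lamk1) / τ * (l1 θk1 - l1 θk) := by
    ring
  linarith [le_add_inner_add_half_mul_sq_of_lipschitz_gradient hgrad hLip θk θk1]
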